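/- arXiv:2603.28201 — 9 statements merged into one kernel-verified Lean document; each statement's English description precedes it below -/
import Mathlib

section
/- Let H be a positive definite d×d real matrix with orthonormal eigenbasis v_1,...,v_d, let w, ℓ ∈ ℝ^d, and let s be sampled uniformly from the set {σ v_i : σ ∈ {-1,1}, i ∈ [d]}. Define w̃ = w + H^{-1/2} s and ℓ̃ = d · H^{1/2} s · ⟨w̃, ℓ⟩. Then E[ℓ̃] = ℓ. -/
/-!
Pairing each eigenvector `v i` with its negative cancels the `w`-dependence of the estimator:
the two samples `±v i` contribute `2d ⟨v i, ℓ⟩ v i`, because `H^{1/2}` and `H^{-1/2}` scale `v i`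
by mutually inverse factors. Averaging over `i` then gives `∑ ⟨v i, ℓ⟩ v i = ℓ`, the expansion
of `ℓ` in the orthonormal basis `v`.
-/

open Matrix Finset

section

variable {n R : Type*} [Fintype n] [DecidableEq n] [CommRing R]

theorem sum_dotProduct_smul_eq_of_orthonormal (v : n → n → R)
    (horth : ∀ i j, v i ⬝ᵥ v j = if i = j then 1 else 0) (x : n → R) :
    ∑ i, (v i ⬝ᵥ x) • v i = x := by
  have hrows : of v * (of v)ᵀ = 1 := by
    ext i j
    simpa [mul_apply, one_apply, dotProduct] using horth i j
  have hcols : (of v)ᵀ * of v = 1 := mul_eq_one_comm.mp hrows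
  calc ∑ i, (v i ⬝ᵥ x) • v i = (of v)ᵀ *ᵥ (of v *ᵥ x) := by
        ext j
        simp [mulVec, dotProduct, Finset.sum_apply, mul_comm]
    _ = x := by rw [mulVec_mulVec, hcols, one_mulVec]

end

theorem smul_mulVec_add_smul_mulVec_neg {n K : Type*} [Fintype n] [Field K]
    (A B : Matrix n n K) (u w ℓ : n → K) {a : K} (ha : a ≠ 0)
    (hA : A *ᵥ u = a • u) (hB : B *ᵥ u = a⁻¹ • u) (c : K) :
    (c * ((w + B *ᵥ u) ⬝ᵥ ℓ)) • A *ᵥ u + (c * ((w + B *ᵥ (-u)) ⬝ᵥ ℓ)) • A *ᵥ (-u)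
      = (2 * c * (u ⬝ᵥ ℓ)) • u := by
  simp only [mulVec_neg, hA, hB, smul_neg, add_dotProduct, neg_dotProduct, smul_dotProduct,
    smul_eq_mul, smul_smul]
  rw [← sub_eq_add_neg, ← sub_smul]
  congr 1
  field_simp
  ring

theorem stmt0_general {d : ℕ} (hd : 0 < d)
    (Hsqrt Hinvsqrt : Matrix (Fin d) (Fin d) ℝ)
    (v : Fin d → (Fin d → ℝ)) (lam : Fin d → ℝ)
    (hlam : ∀ i, 0 < lam i)
    (horth : ∀ i j, v i ⬝ᵥ v j = if i = j then (1 : ℝ) else 0)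
    (hHsqrt : ∀ i, Hsqrt.mulVec (v i) = Real.sqrt (lam i) • v i)
    (hHinvsqrt : ∀ i, Hinvsqrt.mulVec (v i) = (Real.sqrt (lam i))⁻¹ • v i)
    (w ℓ : Fin d → ℝ) :
    (1 / (2 * (d : ℝ))) •
      (∑ i : Fin d,
        ((((d : ℝ) * ((w + Hinvsqrt.mulVec (v i)) ⬝ᵥ ℓ)) • Hsqrt.mulVec (v i)) +
         (((d : ℝ) * ((w + Hinvsqrt.mulVec (-(v i))) ⬝ᵥ ℓ)) • Hsqrt.mulVec (-(v i)))))
      = ℓ := by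
  have hpair (i : Fin d) := smul_mulVec_add_smul_mulVec_neg Hsqrt Hinvsqrt (v i) w ℓ
    (Real.sqrt_pos.mpr (hlam i)).ne' (hHsqrt i) (hHinvsqrt i) d
  have h2d : 2 * (d : ℝ) ≠ 0 := by positivity
  simp only [hpair]
  calc (1 / (2 * (d : ℝ))) • ∑ i, (2 * (d : ℝ) * (v i ⬝ᵥ ℓ)) • v i
        = (1 / (2 * (d : ℝ))) • (2 * (d : ℝ)) • ∑ i, (v i ⬝ᵥ ℓ) • v i := by
          simp only [mul_smul, smul_sum]
    _ = ℓ := by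
          rw [sum_dotProduct_smul_eq_of_orthonormal v horth, smul_smul, one_div,
            inv_mul_cancel₀ h2d, one_smul]

/-- Unbiasedness of the perturbation-based loss estimator: expectation over the
uniform choice of `s` among the `2d` signed eigenvectors of `H` equals `ℓ`. -/
theorem stmt0 {d : ℕ} (hd : 0 < d)
    (H Hsqrt Hinvsqrt : Matrix (Fin d) (Fin d) ℝ)
    (v : Fin d → (Fin d → ℝ)) (lam : Fin d → ℝ)
    (hlam : ∀ i, 0 < lam i)
    (horth : ∀ i j, v i ⬝ᵥ v j = if i = j then (1 : ℝ) else 0)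
    (hH : ∀ i, H.mulVec (v i) = lam i • v i)
    (hHsqrt : ∀ i, Hsqrt.mulVec (v i) = Real.sqrt (lam i) • v i)
    (hHinvsqrt : ∀ i, Hinvsqrt.mulVec (v i) = (Real.sqrt (lam i))⁻¹ • v i)
    (w ℓ : Fin d → ℝ) :
    (1 / (2 * (d : ℝ))) •
      (∑ i : Fin d,
        ((((d : ℝ) * ((w + Hinvsqrt.mulVec (v i)) ⬝ᵥ ℓ)) • Hsqrt.mulVec (v i)) +
         (((d : ℝ) * ((w + Hinvsqrt.mulVec (-(v i))) ⬝ᵥ ℓ)) • Hsqrt.mulVec (-(v i)))))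
      = ℓ :=
  stmt0_general hd Hsqrt Hinvsqrt v lam hlam horth hHsqrt hHinvsqrt w ℓ
end

section
/- Let H be positive definite d×d with orthonormal eigenbasis v_1,...,v_d, let w, ℓ ∈ ℝ^d, and let s be uniform on {±v_i : i ∈ [d]}. Define w̃ = w + H^{-1/2} s and ℓ̃ = d · H^{1/2} s · ⟨w̃, ℓ⟩. Then E[‖ℓ̃‖²] = d‖ℓ‖² + d⟨ℓ, w⟩² · Tr(H). -/
/-!
For `s = ±vᵢ` the estimator is `d·√λᵢ·(⟨w,ℓ⟩ ± λᵢ^{-1/2}⟨vᵢ,ℓ⟩)·(±vᵢ)`, so averaging its squared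
norm over the two signs cancels the cross term and leaves `d²(λᵢ⟨w,ℓ⟩² + ⟨vᵢ,ℓ⟩²)`. Summing over
`i`, the `λᵢ` add up to `Tr H` and the `⟨vᵢ,ℓ⟩²` to `‖ℓ‖²` (Parseval in the eigenbasis).
-/

open Matrix Finset

section Orthonormal

variable {n R : Type*} [Fintype n] [DecidableEq n] [CommRing R] {v : n → n → R}

theorem Matrix.of_mul_transpose_of_eq_one (horth : ∀ i j, v i ⬝ᵥ v j = if i = j then 1 else 0) :
    of v * (of v)ᵀ = 1 := by
  ext i j
  simpa [mul_apply, one_apply, dotProduct] using horth i j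

theorem Matrix.transpose_of_mul_of_eq_one (horth : ∀ i j, v i ⬝ᵥ v j = if i = j then 1 else 0) :
    (of v)ᵀ * of v = 1 :=
  mul_eq_one_comm.mp (of_mul_transpose_of_eq_one horth)

theorem sum_sq_dotProduct_of_orthonormal (horth : ∀ i j, v i ⬝ᵥ v j = if i = j then 1 else 0)
    (x : n → R) : ∑ i, (v i ⬝ᵥ x) ^ 2 = x ⬝ᵥ x :=
  calc ∑ i, (v i ⬝ᵥ x) ^ 2 = (of v *ᵥ x) ⬝ᵥ (of v *ᵥ x) := by simp [sq, dotProduct, mulVec]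
    _ = x ⬝ᵥ ((of v)ᵀ * of v) *ᵥ x := by
      rw [dotProduct_mulVec, ← mulVec_transpose, dotProduct_comm, mulVec_mulVec]
    _ = x ⬝ᵥ x := by rw [transpose_of_mul_of_eq_one horth, one_mulVec]

theorem Matrix.trace_eq_sum_dotProduct_mulVec_of_orthonormal
    (horth : ∀ i j, v i ⬝ᵥ v j = if i = j then 1 else 0) (A : Matrix n n R) :
    A.trace = ∑ i, v i ⬝ᵥ A *ᵥ v i :=
  calc A.trace = (of v * (A * (of v)ᵀ)).trace := by
        rw [trace_mul_comm, Matrix.mul_assoc, transpose_of_mul_of_eq_one horth, Matrix.mul_one]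
    _ = ∑ i, v i ⬝ᵥ A *ᵥ v i := by simp [trace, mul_apply, mulVec, dotProduct, Finset.mul_sum]

end Orthonormal

theorem estimator_sq_add_estimator_neg_sq {n : Type*} [Fintype n] (S Sinv : Matrix n n ℝ) (c : ℝ)
    {a : ℝ} (ha : a ≠ 0) {s : n → ℝ} (hs : s ⬝ᵥ s = 1) (hS : S *ᵥ s = a • s)
    (hSinv : Sinv *ᵥ s = a⁻¹ • s) (w ℓ : n → ℝ) (est : (n → ℝ) → (n → ℝ))
    (hest : ∀ t, est t = (c * ((w + Sinv *ᵥ t) ⬝ᵥ ℓ)) • S *ᵥ t) :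
    est s ⬝ᵥ est s + est (-s) ⬝ᵥ est (-s) = 2 * c ^ 2 * (a ^ 2 * (w ⬝ᵥ ℓ) ^ 2 + (s ⬝ᵥ ℓ) ^ 2) := by
  simp only [hest, mulVec_neg, hS, hSinv, smul_neg, add_dotProduct, neg_dotProduct,
    smul_dotProduct, dotProduct_smul, dotProduct_neg, smul_eq_mul, hs]
  field_simp
  ring

theorem stmt1_general {d : ℕ}
    (H Hsqrt Hinvsqrt : Matrix (Fin d) (Fin d) ℝ)
    (v : Fin d → (Fin d → ℝ)) (lam : Fin d → ℝ)
    (hlam : ∀ i, 0 < lam i)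
    (horth : ∀ i j, v i ⬝ᵥ v j = if i = j then (1 : ℝ) else 0)
    (hH : ∀ i, H.mulVec (v i) = lam i • v i)
    (hHsqrt : ∀ i, Hsqrt.mulVec (v i) = Real.sqrt (lam i) • v i)
    (hHinvsqrt : ∀ i, Hinvsqrt.mulVec (v i) = (Real.sqrt (lam i))⁻¹ • v i)
    (w ℓ : Fin d → ℝ)
    (est : (Fin d → ℝ) → (Fin d → ℝ))
    (hest : ∀ s, est s = (((d : ℝ) * ((w + Hinvsqrt.mulVec s) ⬝ᵥ ℓ)) • Hsqrt.mulVec s)) :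
    (1 / (2 * (d : ℝ))) *
      (∑ i : Fin d, (est (v i) ⬝ᵥ est (v i) + est (-(v i)) ⬝ᵥ est (-(v i))))
      = (d : ℝ) * (ℓ ⬝ᵥ ℓ) + (d : ℝ) * (ℓ ⬝ᵥ w) ^ 2 * H.trace := by
  have hpair (i : Fin d) : est (v i) ⬝ᵥ est (v i) + est (-(v i)) ⬝ᵥ est (-(v i))
      = 2 * (d : ℝ) ^ 2 * (lam i * (w ⬝ᵥ ℓ) ^ 2 + (v i ⬝ᵥ ℓ) ^ 2) := by
    have := estimator_sq_add_estimator_neg_sq Hsqrt Hinvsqrt d (Real.sqrt_pos.2 (hlam i)).ne'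
      (by simpa using horth i i) (hHsqrt i) (hHinvsqrt i) w ℓ est hest
    rwa [Real.sq_sqrt (hlam i).le] at this
  have htrace : H.trace = ∑ i, lam i := by
    simp [trace_eq_sum_dotProduct_mulVec_of_orthonormal horth, hH, horth]
  rw [sum_congr rfl fun i _ => hpair i, ← mul_sum, sum_add_distrib, ← sum_mul, ← htrace,
    sum_sq_dotProduct_of_orthonormal horth, dotProduct_comm ℓ w]
  rcases eq_or_ne (d : ℝ) 0 with hd | hd
  · simp [hd]
  · field_simp
    ring

/-- Second moment of the perturbation-based loss estimator:
`E[‖ℓ̃‖²] = d‖ℓ‖² + d⟨ℓ,w⟩² Tr(H)`, where the expectation is over the uniform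
choice of `s` among the `2d` signed eigenvectors of `H`. -/
theorem stmt1 {d : ℕ} (hd : 0 < d)
    (H Hsqrt Hinvsqrt : Matrix (Fin d) (Fin d) ℝ)
    (v : Fin d → (Fin d → ℝ)) (lam : Fin d → ℝ)
    (hlam : ∀ i, 0 < lam i)
    (horth : ∀ i j, v i ⬝ᵥ v j = if i = j then (1 : ℝ) else 0)
    (hH : ∀ i, H.mulVec (v i) = lam i • v i)
    (hHsqrt : ∀ i, Hsqrt.mulVec (v i) = Real.sqrt (lam i) • v i)
    (hHinvsqrt : ∀ i, Hinvsqrt.mulVec (v i) = (Real.sqrt (lam i))⁻¹ • v i)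
    (w ℓ : Fin d → ℝ)
    (est : (Fin d → ℝ) → (Fin d → ℝ))
    (hest : ∀ s, est s = (((d : ℝ) * ((w + Hinvsqrt.mulVec s) ⬝ᵥ ℓ)) • Hsqrt.mulVec s)) :
    (1 / (2 * (d : ℝ))) *
      (∑ i : Fin d, (est (v i) ⬝ᵥ est (v i) + est (-(v i)) ⬝ᵥ est (-(v i))))
      = (d : ℝ) * (ℓ ⬝ᵥ ℓ) + (d : ℝ) * (ℓ ⬝ᵥ w) ^ 2 * H.trace :=
  stmt1_general H Hsqrt Hinvsqrt v lam hlam horth hH hHsqrt hHinvsqrt w ℓ est hest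
end

section
/- Let b > 1, 0 < η_min ≤ η_max, and let S = {min(η_min b^i, η_max) : i = 0, 1, 2, ...}. Then for any P, V ≥ 0 there exists η ∈ S such that P/η + η V ≤ (b+1)√(PV) + P/η_max + η_min V. -/
/-! With `η⋆ = √(P/V)`, the step-size balancing the two terms, any `η ≥ η⋆` has `P/η ≤ √(PV)`
and any `η ≤ b η⋆` has `ηV ≤ b√(PV)`. The grid climbs by factors of `b`, so its first point that
is either `≥ η⋆` or already capped at `η_max` is at most `b η⋆` unless it is the very first point
`η_min`; the cap costs at most `P/η_max` and the first point at most `η_min V`.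

The comparisons with `η⋆` are stated as `P ≤ η² V` and `η² V ≤ P`, which avoids dividing by `V`. -/

section
variable {P V η : ℝ}

lemma div_le_sqrt_mul_of_le_sq_mul (hP : 0 ≤ P) (hη : 0 < η) (h : P ≤ η ^ 2 * V) :
    P / η ≤ √(P * V) := by
  refine Real.le_sqrt_of_sq_le ?_
  calc (P / η) ^ 2 = P * (P / η ^ 2) := by ring
    _ ≤ P * V := mul_le_mul_of_nonneg_left ((div_le_iff₀ (by positivity)).2 (by linarith)) hP

lemma mul_le_sqrt_mul_of_sq_mul_le (hV : 0 ≤ V) (h : η ^ 2 * V ≤ P) : η * V ≤ √(P * V) := by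
  refine Real.le_sqrt_of_sq_le ?_
  calc (η * V) ^ 2 = η ^ 2 * V * V := by ring
    _ ≤ P * V := mul_le_mul_of_nonneg_right h hV

lemma div_min_le_sqrt_mul_add_div {x y : ℝ} (hP : 0 ≤ P) (hx : 0 < x) (hy : 0 < y)
    (h : y ≤ x ∨ P ≤ x ^ 2 * V) : P / min x y ≤ √(P * V) + P / y := by
  have hPy : 0 ≤ P / y := div_nonneg hP hy.le
  rcases lt_or_ge x y with hxy | hyx
  · rw [min_eq_left hxy.le]
    have hPx := div_le_sqrt_mul_of_le_sq_mul hP hx (h.resolve_left hxy.not_ge)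
    linarith
  · rw [min_eq_right hyx]
    linarith [Real.sqrt_nonneg (P * V)]

lemma min_pow_mul_le_sqrt_mul_add {b c y : ℝ} {i : ℕ} (hb : 0 ≤ b) (hc : 0 ≤ c) (hV : 0 ≤ V)
    (hprev : ∀ k, i = k + 1 → (c * b ^ k) ^ 2 * V ≤ P) :
    min (c * b ^ i) y * V ≤ b * √(P * V) + c * V := by
  rcases i with _ | k
  · rw [pow_zero, mul_one]
    have := mul_le_mul_of_nonneg_right (min_le_left c y) hV
    linarith [mul_nonneg hb (Real.sqrt_nonneg (P * V))]
  · calc min (c * b ^ (k + 1)) y * V ≤ c * b ^ (k + 1) * V :=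
          mul_le_mul_of_nonneg_right (min_le_left _ _) hV
      _ = b * (c * b ^ k * V) := by ring
      _ ≤ b * √(P * V) := by
          gcongr
          exact mul_le_sqrt_mul_of_sq_mul_le hV (hprev k rfl)
      _ ≤ b * √(P * V) + c * V := le_add_of_nonneg_right (by positivity)

end

/-- Tuning lemma: on the geometric grid `S = {min(η_min bⁱ, η_max)}` there is a
step-size `η` with `P/η + ηV ≤ (b+1)√(PV) + P/η_max + η_min V`. -/
theorem stmt6 (b ηmin ηmax P V : ℝ) (hb : 1 < b) (h0 : 0 < ηmin) (hle : ηmin ≤ ηmax)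
    (hP : 0 ≤ P) (hV : 0 ≤ V) :
    ∃ i : ℕ, P / min (ηmin * b ^ i) ηmax + min (ηmin * b ^ i) ηmax * V
      ≤ (b + 1) * Real.sqrt (P * V) + P / ηmax + ηmin * V := by
  let Q (i : ℕ) := ηmax ≤ ηmin * b ^ i ∨ P ≤ (ηmin * b ^ i) ^ 2 * V
  have hQ : ∃ i, Q i := by
    obtain ⟨n, hn⟩ := pow_unbounded_of_one_lt (ηmax / ηmin) hb
    exact ⟨n, Or.inl ((div_lt_iff₀' h0).1 hn).le⟩
  classical
  obtain ⟨i, hQi, hmin⟩ : ∃ i, Q i ∧ ∀ j < i, ¬ Q j :=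
    ⟨Nat.find hQ, Nat.find_spec hQ, fun _ => Nat.find_min hQ⟩
  refine ⟨i, ?_⟩
  have hdiv := div_min_le_sqrt_mul_add_div hP (by positivity) (h0.trans_le hle) hQi
  have hprev : ∀ k, i = k + 1 → (ηmin * b ^ k) ^ 2 * V ≤ P := by
    rintro k rfl
    have := hmin k k.lt_succ_self
    simp only [Q, not_or, not_le] at this
    exact this.2.le
  have hmul := min_pow_mul_le_sqrt_mul_add (zero_le_one.trans hb.le) h0.le hV hprev (y := ηmax)
  linarith
end

section
/- Suppose an online linear optimization algorithm produces iterates w_1, w_2, ... ∈ ℝ^d with the property that for every T ≥ 1 and every loss sequence (g_t)_{t∈[T]} with ‖g_t‖ ≤ G, it holds that Σ_{t=1}^T ⟨g_t, w_t⟩ ≤ εG (where w_t may depend on g_1,...,g_{t-1}). Then ‖w_t‖ ≤ ε 2^{t-1} for all t. -/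
/-!
Keep the given losses `g_s` for `s < t` and then play `G • w_t / ‖w_t‖`. Each earlier round costs
at least `-G ‖w_s‖` and the last one costs `G ‖w_t‖`, so the guarantee forces
`‖w_t‖ ≤ ε + Σ_{s<t} ‖w_s‖`; this discrete Grönwall inequality gives `‖w_t‖ ≤ ε 2^t`.
-/

open scoped RealInnerProductSpace

theorem le_mul_two_pow_of_le_add_sum {a : ℕ → ℝ} {c : ℝ}
    (h : ∀ t, a t ≤ c + ∑ s ∈ Finset.range t, a s) (t : ℕ) : a t ≤ c * 2 ^ t := by
  induction t using Nat.strong_induction_on with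
  | _ t ih =>
    calc a t ≤ c + ∑ s ∈ Finset.range t, a s := h t
      _ ≤ c + ∑ s ∈ Finset.range t, c * 2 ^ s := by
          gcongr with s hs
          exact ih s (Finset.mem_range.mp hs)
      _ = c * 2 ^ t := by
          rw [← Finset.mul_sum, geom_sum_eq (by norm_num : (2 : ℝ) ≠ 1)]
          ring

theorem List.map_range_ite_lt {α : Type*} {s t : ℕ} (hs : s ≤ t) (g : ℕ → α) (v : α) :
    (List.range s).map (fun r => if r < t then g r else v) = (List.range s).map g :=
  List.map_congr_left fun _ hr => if_pos ((List.mem_range.mp hr).trans_le hs)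

section InnerProductSpace

variable {E : Type*} [NormedAddCommGroup E] [InnerProductSpace ℝ E]

theorem inner_div_norm_smul_self (G : ℝ) (w : E) : ⟪(G / ‖w‖) • w, w⟫ = G * ‖w‖ := by
  rcases eq_or_ne w 0 with rfl | hw
  · simp
  · rw [real_inner_smul_left, real_inner_self_eq_norm_sq]
    field_simp

theorem norm_div_norm_smul_self_le {G : ℝ} (hG : 0 ≤ G) (w : E) : ‖(G / ‖w‖) • w‖ ≤ G := by
  rcases eq_or_ne w 0 with rfl | hw
  · simpa using hG
  · rw [norm_smul, Real.norm_of_nonneg (by positivity)]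
    rw [div_mul_cancel₀ G (norm_ne_zero_iff.mpr hw)]

theorem norm_iterate_le_add_sum_of_regret_le {G ε : ℝ} (hG : 0 < G) (A : List E → E)
    (hreg : ∀ g : ℕ → E, (∀ t, ‖g t‖ ≤ G) →
      ∀ T : ℕ, ∑ t ∈ Finset.range T, ⟪g t, A ((List.range t).map g)⟫ ≤ ε * G)
    (g : ℕ → E) (hg : ∀ t, ‖g t‖ ≤ G) (t : ℕ) :
    ‖A ((List.range t).map g)‖ ≤ ε + ∑ s ∈ Finset.range t, ‖A ((List.range s).map g)‖ := by
  set w := A ((List.range t).map g)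
  set v := (G / ‖w‖) • w
  set g' : ℕ → E := fun s => if s < t then g s else v
  have hg' : ∀ s, ‖g' s‖ ≤ G := fun s => by
    by_cases hs : s < t
    · simpa [g', hs] using hg s
    · simpa [g', hs] using norm_div_norm_smul_self_le hG.le w
  have hpast : ∀ s ∈ Finset.range t,
      -(G * ‖A ((List.range s).map g)‖) ≤ ⟪g' s, A ((List.range s).map g')⟫ := by
    intro s hs
    have hst := Finset.mem_range.mp hs
    rw [List.map_range_ite_lt hst.le]
    calc -(G * ‖A ((List.range s).map g)‖) ≤ -(‖g s‖ * ‖A ((List.range s).map g)‖) := by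
          gcongr
          exact hg s
      _ ≤ ⟪g s, A ((List.range s).map g)⟫ := neg_le_of_abs_le (abs_real_inner_le_norm _ _)
      _ = ⟪g' s, A ((List.range s).map g)⟫ := by simp [g', hst]
  have hregret := hreg g' hg' (t + 1)
  rw [Finset.sum_range_succ, List.map_range_ite_lt le_rfl] at hregret
  have hlast : ⟪g' t, w⟫ = G * ‖w‖ := by simp [g', v, inner_div_norm_smul_self]
  have hsum := Finset.sum_le_sum hpast
  rw [Finset.sum_neg_distrib, ← Finset.mul_sum] at hsum
  refine le_of_mul_le_mul_left ?_ hG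
  linarith

end InnerProductSpace

theorem stmt7_general {d : ℕ} (G ε : ℝ) (hG : 0 < G)
    (A : List (EuclideanSpace ℝ (Fin d)) → EuclideanSpace ℝ (Fin d))
    (hreg : ∀ g : ℕ → EuclideanSpace ℝ (Fin d), (∀ t, ‖g t‖ ≤ G) →
      ∀ T : ℕ, ∑ t ∈ Finset.range T, ⟪g t, A ((List.range t).map g)⟫ ≤ ε * G) :
    ∀ g : ℕ → EuclideanSpace ℝ (Fin d), (∀ t, ‖g t‖ ≤ G) →
      ∀ t : ℕ, ‖A ((List.range t).map g)‖ ≤ ε * 2 ^ t :=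
  fun g hg => le_mul_two_pow_of_le_add_sum (norm_iterate_le_add_sum_of_regret_le hG A hreg g hg)

/-- If an OLO algorithm `A` (mapping loss histories to iterates) guarantees
`Σ_{t=1}^T ⟨g_t, w_t⟩ ≤ εG` for every horizon and every loss sequence with `‖g_t‖ ≤ G`,
then its iterates satisfy `‖w_t‖ ≤ ε 2^{t-1}`, i.e. the iterate produced after
seeing `t` losses has norm at most `ε 2^t`. -/
theorem stmt7 {d : ℕ} (G ε : ℝ) (hG : 0 < G) (hε : 0 < ε)
    (A : List (EuclideanSpace ℝ (Fin d)) → EuclideanSpace ℝ (Fin d))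
    (hreg : ∀ g : ℕ → EuclideanSpace ℝ (Fin d), (∀ t, ‖g t‖ ≤ G) →
      ∀ T : ℕ, ∑ t ∈ Finset.range T, ⟪g t, A ((List.range t).map g)⟫ ≤ ε * G) :
    ∀ g : ℕ → EuclideanSpace ℝ (Fin d), (∀ t, ‖g t‖ ≤ G) →
      ∀ t : ℕ, ‖A ((List.range t).map g)‖ ≤ ε * 2 ^ t :=
  stmt7_general G ε hG A hreg
end

section
/- Let c, α > 0, p ≥ 1, and (w_t)_{t=1}^T a sequence in ℝ^d. Define r_t(w) = c‖w‖^p / (α^p + Σ_{s=1}^t ‖w_s‖^p)^{1-1/p} when ‖w‖ ≤ ‖w_t‖ (and the Huber-like linear extension otherwise). Then Σ_{t=1}^T r_t(w_t) ≥ c(α^p + Σ_{t=1}^T ‖w_t‖^p)^{1/p} − cα. -/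
open Finset

/-! For `q ≤ 1`, `(x + y) ^ q - x ^ q ≤ y * (x + y) ^ (q - 1)`: multiply out and use
`x ^ (1 - q) ≤ (x + y) ^ (1 - q)`. With `q = 1 / p` and `x` the partial sums
`α ^ p + ∑_{s < t} ‖w s‖ ^ p`, the left-hand sides telescope. -/

theorem Real.rpow_add_sub_rpow_le_div {x y q : ℝ} (hx : 0 < x) (hy : 0 ≤ y) (hq : q ≤ 1) :
    (x + y) ^ q - x ^ q ≤ y / (x + y) ^ (1 - q) := by
  have hxy : 0 < x + y := by linarith
  have h_mono : x ^ (1 - q) ≤ (x + y) ^ (1 - q) :=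
    Real.rpow_le_rpow hx.le (by linarith) (by linarith)
  have h_split : ∀ z : ℝ, 0 < z → z ^ q * z ^ (1 - q) = z := fun z hz => by
    rw [← Real.rpow_add hz, add_sub_cancel, Real.rpow_one]
  have h_lower : x ≤ x ^ q * (x + y) ^ (1 - q) :=
    (h_split x hx).symm.le.trans (by gcongr)
  rw [le_div_iff₀ (Real.rpow_pos_of_pos hxy _), sub_mul, h_split _ hxy]
  linarith

theorem Real.rpow_add_sum_Icc_sub_rpow_le {a : ℕ → ℝ} {x₀ q : ℝ} (hx₀ : 0 < x₀)
    (ha : ∀ t, 0 ≤ a t) (hq : q ≤ 1) (n : ℕ) :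
    (x₀ + ∑ t ∈ Icc 1 n, a t) ^ q - x₀ ^ q ≤
      ∑ t ∈ Icc 1 n, a t / (x₀ + ∑ s ∈ Icc 1 t, a s) ^ (1 - q) := by
  induction n with
  | zero => simp
  | succ n ih =>
    have h_partial : 0 < x₀ + ∑ t ∈ Icc 1 n, a t :=
      add_pos_of_pos_of_nonneg hx₀ (sum_nonneg fun t _ => ha t)
    have h_step := Real.rpow_add_sub_rpow_le_div h_partial (ha (n + 1)) hq
    simp only [sum_Icc_succ_top (Nat.le_add_left 1 n), ← add_assoc]
    linarith

theorem stmt8_general {d : ℕ} (c α p : ℝ) (hc : 0 < c) (hα : 0 < α) (hp : 1 ≤ p)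
    (T : ℕ) (w : ℕ → EuclideanSpace ℝ (Fin d)) :
    c * (α ^ p + ∑ t ∈ Finset.Icc 1 T, ‖w t‖ ^ p) ^ (1 / p) - c * α ≤
      ∑ t ∈ Finset.Icc 1 T,
        c * ‖w t‖ ^ p / (α ^ p + ∑ s ∈ Finset.Icc 1 t, ‖w s‖ ^ p) ^ (1 - 1 / p) := by
  have hp₀ : 0 < p := one_pos.trans_le hp
  have h_root : (α ^ p) ^ (1 / p) = α := by
    rw [← Real.rpow_mul hα.le, mul_one_div_cancel hp₀.ne', Real.rpow_one]
  have h_telescope := Real.rpow_add_sum_Icc_sub_rpow_le (Real.rpow_pos_of_pos hα p)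
    (fun t => Real.rpow_nonneg (norm_nonneg (w t)) p)
    ((div_le_one hp₀).mpr hp) T
  rw [h_root] at h_telescope
  simp_rw [mul_div_assoc, ← mul_sum, ← mul_sub]
  exact mul_le_mul_of_nonneg_left h_telescope hc.le

/-- Lower bound branch of the Huber-like penalty evaluated at the iterates:
`Σ_{t=1}^T c‖w_t‖^p / (α^p + Σ_{s=1}^t ‖w_s‖^p)^{1-1/p} ≥ c(α^p + Σ_{t=1}^T ‖w_t‖^p)^{1/p} − cα`. -/
theorem stmt8 {d : ℕ} (c α p : ℝ) (hc : 0 < c) (hα : 0 < α) (hp : 1 ≤ p)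
    (T : ℕ) (hT : 1 ≤ T) (w : ℕ → EuclideanSpace ℝ (Fin d)) :
    c * (α ^ p + ∑ t ∈ Finset.Icc 1 T, ‖w t‖ ^ p) ^ (1 / p) - c * α ≤
      ∑ t ∈ Finset.Icc 1 T,
        c * ‖w t‖ ^ p / (α ^ p + ∑ s ∈ Finset.Icc 1 t, ‖w s‖ ^ p) ^ (1 - 1 / p) :=
  stmt8_general c α p hc hα hp T w
end

section
/- Let c, α > 0, p ≥ 1, (w_t)_{t=1}^T and (u_t)_{t=1}^T sequences in ℝ^d, and let r_t be the Huber-like penalty: r_t(u) = c(p‖u‖ − (p−1)‖w_t‖)·‖w_t‖^{p−1}/(α^p + Σ_{s≤t}‖w_s‖^p)^{1−1/p} if ‖u‖ > ‖w_t‖, and r_t(u) = c‖u‖^p/(α^p + Σ_{s≤t}‖w_s‖^p)^{1−1/p} if ‖u‖ ≤ ‖w_t‖. Then Σ_{t=1}^T r_t(u_t) ≤ c·p·(α^p + Σ_{t=1}^T ‖u_t‖^p)^{1/p} · [ (log(1 + Σ_{t=1}^T ‖u_t‖^p / α^p))^{(p−1)/p} + 1 ]. -/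
/-!
Write `m_t = min ‖w_t‖ ‖u_t‖` and `B_t = α^p + Σ_{s ≤ t} m_s^p ≤ α^p + Σ_{s ≤ t} ‖w_s‖^p`.
In both branches of the penalty the numerator is at most `p ‖u_t‖ m_t^{p-1}`, so the sum is at most
`c p Σ_t ‖u_t‖ · m_t^{p-1} / B_t^{1-1/p}`. Hölder's inequality with exponents `p` and `p/(p-1)`
bounds this by `c p (Σ ‖u_t‖^p)^{1/p} (Σ_t m_t^p / B_t)^{(p-1)/p}`, and the last sum telescopes
against the logarithm: `m_t^p / B_t ≤ log B_t - log B_{t-1}`.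
-/

open Finset

namespace HuberPenalty

theorem sum_div_add_partialSum_le_log {a : ℕ → ℝ} (ha : ∀ t, 0 ≤ a t) {β : ℝ} (hβ : 0 < β)
    (n : ℕ) :
    ∑ t ∈ Icc 1 n, a t / (β + ∑ s ∈ Icc 1 t, a s) ≤ Real.log (1 + (∑ t ∈ Icc 1 n, a t) / β) := by
  induction n with
  | zero => simp
  | succ n ih =>
    rw [sum_Icc_succ_top (by omega), sum_Icc_succ_top (by omega)]
    set S := ∑ s ∈ Icc 1 n, a s
    have hS : 0 < β + S := by positivity [sum_nonneg fun s (_ : s ∈ Icc 1 n) => ha s]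
    have hS' : 0 < β + (S + a (n + 1)) := by linarith [ha (n + 1)]
    -- `a / (S + a) = 1 - S / (S + a) ≤ log ((S + a) / S)`
    have hstep : a (n + 1) / (β + (S + a (n + 1))) ≤
        Real.log (β + (S + a (n + 1))) - Real.log (β + S) := by
      have := Real.one_sub_inv_le_log_of_pos (div_pos hS' hS)
      rw [Real.log_div hS'.ne' hS.ne', inv_div] at this
      convert this using 1
      field_simp
      ring
    have hlog : ∀ x, 0 < β + x → Real.log (1 + x / β) = Real.log (β + x) - Real.log β := by
      intro x hx
      rw [← Real.log_div hx.ne' hβ.ne', add_div, div_self hβ.ne']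
    rw [hlog _ hS] at ih
    rw [hlog _ hS']
    linarith

theorem numerator_le {x y p : ℝ} (hx : 0 ≤ x) (hy : 0 ≤ y) (hp : 1 ≤ p) :
    (if x < y then (p * y - (p - 1) * x) * x ^ (p - 1) else y ^ p) ≤ p * y * min x y ^ (p - 1) := by
  split_ifs with h
  · rw [min_eq_left h.le]
    have : 0 ≤ (p - 1) * x * x ^ (p - 1) := by
      have : 0 ≤ p - 1 := by linarith
      positivity
    nlinarith
  · rw [min_eq_right (not_lt.mp h), mul_assoc, ← Real.rpow_one_add' hy (by linarith),
      add_sub_cancel]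
    have : 0 ≤ y ^ p := by positivity
    nlinarith

theorem penalty_le {x y c p B D : ℝ} (hx : 0 ≤ x) (hy : 0 ≤ y) (hc : 0 ≤ c) (hp : 1 ≤ p)
    (hB : 0 < B) (hBD : B ≤ D) :
    (if x < y then c * (p * y - (p - 1) * x) * x ^ (p - 1) / D ^ (1 - 1 / p)
      else c * y ^ p / D ^ (1 - 1 / p)) ≤ c * p * (y * (min x y ^ (p - 1) / B ^ (1 - 1 / p))) := by
  have hexp : 0 ≤ 1 - 1 / p := sub_nonneg.2 (div_le_one_of_le₀ hp (by linarith))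
  have hden : B ^ (1 - 1 / p) ≤ D ^ (1 - 1 / p) := Real.rpow_le_rpow hB.le hBD hexp
  calc _ = c * (if x < y then (p * y - (p - 1) * x) * x ^ (p - 1) else y ^ p) /
        D ^ (1 - 1 / p) := by split_ifs <;> ring
    _ ≤ c * (p * y * min x y ^ (p - 1)) / B ^ (1 - 1 / p) := by
        gcongr
        exact numerator_le hx hy hp
    _ = _ := by ring

theorem sum_mul_rpow_div_rpow_le {ι : Type*} (s : Finset ι) {y m B : ι → ℝ} {p : ℝ} (hp : 1 ≤ p)
    (hy : ∀ i ∈ s, 0 ≤ y i) (hm : ∀ i ∈ s, 0 ≤ m i) (hB : ∀ i ∈ s, 0 < B i) :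
    ∑ i ∈ s, y i * (m i ^ (p - 1) / B i ^ (1 - 1 / p)) ≤
      (∑ i ∈ s, y i ^ p) ^ (1 / p) * (∑ i ∈ s, m i ^ p / B i) ^ ((p - 1) / p) := by
  rcases hp.eq_or_lt with rfl | hp
  · simp
  set q := p / (p - 1)
  have hpq : p.HolderConjugate q := (Real.holderConjugate_iff_eq_conjExponent hp).2 rfl
  have hq : 1 / q = (p - 1) / p := one_div_div _ _
  have hpow : ∀ i ∈ s, (m i ^ (p - 1) / B i ^ (1 - 1 / p)) ^ q = m i ^ p / B i := by
    intro i hi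
    have hp0 : p ≠ 0 := by positivity
    have hp1 : p - 1 ≠ 0 := by linarith
    have hmq : (p - 1) * q = p := by simp only [q]; field_simp
    have hBq : (1 - 1 / p) * q = 1 := by simp only [q]; field_simp
    rw [Real.div_rpow (by positivity [hm i hi]) (by positivity [hB i hi]),
      ← Real.rpow_mul (hm i hi), ← Real.rpow_mul (hB i hi).le, hmq, hBq, Real.rpow_one]
  have := Real.inner_le_Lp_mul_Lq_of_nonneg s (g := fun i => m i ^ (p - 1) / B i ^ (1 - 1 / p))
    hpq hy fun i hi => div_nonneg (Real.rpow_nonneg (hm i hi) _) (Real.rpow_nonneg (hB i hi).le _)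
  rwa [sum_congr rfl hpow, hq] at this

end HuberPenalty

open HuberPenalty

theorem stmt9_general {d : ℕ} (c α p : ℝ) (hc : 0 < c) (hα : 0 < α) (hp : 1 ≤ p)
    (T : ℕ) (w u : ℕ → EuclideanSpace ℝ (Fin d)) :
    ∑ t ∈ Finset.Icc 1 T,
      (if ‖w t‖ < ‖u t‖ then
        c * (p * ‖u t‖ - (p - 1) * ‖w t‖) * ‖w t‖ ^ (p - 1) /
          (α ^ p + ∑ s ∈ Finset.Icc 1 t, ‖w s‖ ^ p) ^ (1 - 1 / p)
      else
        c * ‖u t‖ ^ p / (α ^ p + ∑ s ∈ Finset.Icc 1 t, ‖w s‖ ^ p) ^ (1 - 1 / p))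
    ≤ c * p * (α ^ p + ∑ t ∈ Finset.Icc 1 T, ‖u t‖ ^ p) ^ (1 / p) *
        ((Real.log (1 + (∑ t ∈ Finset.Icc 1 T, ‖u t‖ ^ p) / α ^ p)) ^ ((p - 1) / p) + 1) := by
  set m : ℕ → ℝ := fun t => min ‖w t‖ ‖u t‖
  have hm : ∀ t, 0 ≤ m t := fun t => le_min (norm_nonneg _) (norm_nonneg _)
  set B : ℕ → ℝ := fun t => α ^ p + ∑ s ∈ Icc 1 t, m s ^ p
  have hB : ∀ t, 0 < B t := fun t => by positivity [fun s => hm s]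
  have hBw : ∀ t, B t ≤ α ^ p + ∑ s ∈ Icc 1 t, ‖w s‖ ^ p := fun t => by
    show α ^ p + ∑ s ∈ Icc 1 t, m s ^ p ≤ _
    gcongr with s
    exact min_le_left _ _
  have hlog : ∑ t ∈ Icc 1 T, m t ^ p / B t ≤
      Real.log (1 + (∑ t ∈ Icc 1 T, ‖u t‖ ^ p) / α ^ p) := by
    refine (sum_div_add_partialSum_le_log (fun t => by positivity [hm t]) (by positivity) T).trans
      (Real.log_le_log (by positivity [fun t => hm t]) ?_)
    gcongr with t
    exact min_le_right _ _
  calc _ ≤ ∑ t ∈ Icc 1 T, c * p * (‖u t‖ * (m t ^ (p - 1) / B t ^ (1 - 1 / p))) :=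
        sum_le_sum fun t _ => penalty_le (norm_nonneg _) (norm_nonneg _) hc.le hp (hB t) (hBw t)
    _ = c * p * ∑ t ∈ Icc 1 T, ‖u t‖ * (m t ^ (p - 1) / B t ^ (1 - 1 / p)) := (mul_sum ..).symm
    _ ≤ c * p * ((∑ t ∈ Icc 1 T, ‖u t‖ ^ p) ^ (1 / p) *
          (∑ t ∈ Icc 1 T, m t ^ p / B t) ^ ((p - 1) / p)) := by
        gcongr
        exact sum_mul_rpow_div_rpow_le _ hp (fun t _ => norm_nonneg _) (fun t _ => hm t)
          fun t _ => hB t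
    _ ≤ c * p * ((α ^ p + ∑ t ∈ Icc 1 T, ‖u t‖ ^ p) ^ (1 / p) *
          Real.log (1 + (∑ t ∈ Icc 1 T, ‖u t‖ ^ p) / α ^ p) ^ ((p - 1) / p)) := by
        have : 0 ≤ (p - 1) / p := div_nonneg (by linarith) (by linarith)
        gcongr
        exact le_add_of_nonneg_left (by positivity)
    _ ≤ _ := by
        rw [mul_assoc (c * p)]
        gcongr
        exact le_add_of_nonneg_right zero_le_one

/-- Upper bound for the Huber-like penalty evaluated at an arbitrary comparator
sequence `(u_t)`:
`Σ_{t=1}^T r_t(u_t) ≤ c p (α^p + Σ‖u_t‖^p)^{1/p} [(log(1 + Σ‖u_t‖^p/α^p))^{(p-1)/p} + 1]`. -/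
theorem stmt9 {d : ℕ} (c α p : ℝ) (hc : 0 < c) (hα : 0 < α) (hp : 1 ≤ p)
    (T : ℕ) (hT : 1 ≤ T) (w u : ℕ → EuclideanSpace ℝ (Fin d)) :
    ∑ t ∈ Finset.Icc 1 T,
      (if ‖w t‖ < ‖u t‖ then
        c * (p * ‖u t‖ - (p - 1) * ‖w t‖) * ‖w t‖ ^ (p - 1) /
          (α ^ p + ∑ s ∈ Finset.Icc 1 t, ‖w s‖ ^ p) ^ (1 - 1 / p)
      else
        c * ‖u t‖ ^ p / (α ^ p + ∑ s ∈ Finset.Icc 1 t, ‖w s‖ ^ p) ^ (1 - 1 / p))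
    ≤ c * p * (α ^ p + ∑ t ∈ Finset.Icc 1 T, ‖u t‖ ^ p) ^ (1 / p) *
        ((Real.log (1 + (∑ t ∈ Finset.Icc 1 T, ‖u t‖ ^ p) / α ^ p)) ^ ((p - 1) / p) + 1) :=
  stmt9_general c α p hc hα hp T w u
end

section
/- Let f(x) = (k/η) ∫_0^x log(kv/(αηγ) + 1) dv for x ≥ 0, with k, η, α, γ > 0. Then the Fenchel conjugate of f restricted to [0, ∞) satisfies f*(θ) ≤ αγ (exp(ηθ/k) − ηθ/k) for all θ ≥ 0. -/
/-!
With `c = αηγ` and `a = kx/c + 1`, the substitution `u = kv/c + 1` turns the integral into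
`(c/k)(a log a - a + 1)`, and after multiplying through by `η/c` the claim becomes the
Fenchel–Young inequality `a s ≤ a log a - a + exp s` for the conjugate pair
`a log a - a` and `exp`, at `s = ηθ/k`, with `αγ` to spare.
-/

open Real

theorem Real.mul_le_mul_log_sub_add_exp {a : ℝ} (ha : 0 < a) (s : ℝ) :
    a * s ≤ a * log a - a + exp s := by
  -- `exp s = a * exp (s - log a) ≥ a * (s - log a + 1)`
  have h := mul_le_mul_of_nonneg_left (add_one_le_exp (s - log a)) ha.le
  rw [exp_sub, exp_log ha, mul_div_cancel₀ _ ha.ne'] at h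
  linarith

theorem integral_log_mul_add_one {r : ℝ} (hr : r ≠ 0) (x : ℝ) :
    ∫ v in (0:ℝ)..x, log (r * v + 1)
      = ((r * x + 1) * log (r * x + 1) - (r * x + 1) + 1) / r := by
  rw [intervalIntegral.integral_comp_mul_add (fun u => log u) hr, integral_log]
  simp only [mul_zero, zero_add, log_one, smul_eq_mul]
  field_simp
  ring

/-- The Fenchel conjugate of `f(x) = (k/η)∫₀ˣ log(kv/(αηγ)+1) dv` on `[0,∞)` satisfies
`f*(θ) ≤ αγ(exp(ηθ/k) − ηθ/k)` for `θ ≥ 0`, i.e. every `x ≥ 0` obeys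
`θx − f(x) ≤ αγ(exp(ηθ/k) − ηθ/k)`. -/
theorem stmt14 (k η α γ : ℝ) (hk : 0 < k) (hη : 0 < η) (hα : 0 < α) (hγ : 0 < γ) :
    ∀ θ : ℝ, 0 ≤ θ → ∀ x : ℝ, 0 ≤ x →
      θ * x - (k / η) * ∫ v in (0:ℝ)..x, Real.log (k * v / (α * η * γ) + 1)
        ≤ α * γ * (Real.exp (η * θ / k) - η * θ / k) := by
  intro θ _ x hx
  set c := α * η * γ with hc
  have hc0 : 0 < c := by positivity
  simp_rw [mul_div_right_comm k]
  rw [integral_log_mul_add_one (by positivity) x]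
  set a := k / c * x + 1
  set s := η * θ / k
  have ha : 0 < a := by positivity
  have hgap : θ * x - k / η * ((a * log a - a + 1) / (k / c)) - α * γ * (exp s - s)
      = c / η * (a * s - (a * log a - a + exp s)) - c / η := by
    generalize log a = L
    simp only [a, s, hc]
    field_simp
    ring
  have hcη : 0 < c / η := by positivity
  have hyoung := mul_le_mul_of_nonneg_left (Real.mul_le_mul_log_sub_add_exp ha s) hcη.le
  linarith
end

section
/- Let d ≥ 1, T ≥ 4d, Δ = 1/(8√T), and for each t let x_t ∈ ℝ^d with ‖x_t‖ ≤ 1. Define τ_i = min(T, min{t ≥ 1 : Σ_{s=1}^t x_{si}² ≥ T/d − 1}) and U_i(σ) = Σ_{t=1}^{τ_i} (1/√d + σ x_{ti})². Then U_i(σ) ≤ 4T/d for every i ∈ [d] and σ ∈ {−1, 1}, and U_i(1) + U_i(−1) = 2 Σ_{t=1}^{τ_i} (1/d + x_{ti}²) ≥ 2(T/d − 1). -/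
open Finset

theorem sum_Icc_one_succ_le_of_sum_le {g : ℕ → ℝ} {n : ℕ} {b c : ℝ}
    (h : ∑ s ∈ Icc 1 n, g s ≤ c) (hg : g (n + 1) ≤ b) :
    ∑ s ∈ Icc 1 (n + 1), g s ≤ c + b := by
  rw [sum_Icc_succ_top (by omega)]
  linarith

theorem sum_add_mul_sq_le {ι : Type*} (s : Finset ι) (a : ℝ) {σ : ℝ} (hσ : σ ^ 2 = 1)
    (y : ι → ℝ) :
    ∑ t ∈ s, (a + σ * y t) ^ 2 ≤ 2 * (#s * a ^ 2 + ∑ t ∈ s, y t ^ 2) := by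
  calc ∑ t ∈ s, (a + σ * y t) ^ 2 ≤ ∑ t ∈ s, 2 * (a ^ 2 + y t ^ 2) :=
        sum_le_sum fun t _ => by
          simpa only [mul_pow, hσ, one_mul] using add_sq_le (a := a) (b := σ * y t)
    _ = 2 * (#s * a ^ 2 + ∑ t ∈ s, y t ^ 2) := by
        rw [← mul_sum, sum_add_distrib, sum_const, nsmul_eq_mul]

theorem sum_add_sq_add_sum_add_neg_sq {ι : Type*} (s : Finset ι) (a : ℝ) (y : ι → ℝ) :
    ∑ t ∈ s, (a + y t) ^ 2 + ∑ t ∈ s, (a + (-1) * y t) ^ 2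
      = 2 * ∑ t ∈ s, (a ^ 2 + y t ^ 2) := by
  rw [← sum_add_distrib, mul_sum]
  exact sum_congr rfl fun t _ => by ring

theorem stmt17_general (d T : ℕ)
    (x : ℕ → Fin d → ℝ) (hx : ∀ t, ∑ i, (x t i) ^ 2 ≤ 1)
    (τ : Fin d → ℕ)
    (hτ1 : ∀ i, 1 ≤ τ i) (hτT : ∀ i, τ i ≤ T)
    (hmin : ∀ i, ∀ t, t < τ i →
      ∑ s ∈ Finset.Icc 1 t, (x s i) ^ 2 < (T : ℝ) / d - 1)
    (hreach : ∀ i, τ i = T ∨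
      (T : ℝ) / d - 1 ≤ ∑ s ∈ Finset.Icc 1 (τ i), (x s i) ^ 2) :
    (∀ i, ∀ σ : ℝ, σ = 1 ∨ σ = -1 →
        ∑ t ∈ Finset.Icc 1 (τ i), (1 / Real.sqrt d + σ * x t i) ^ 2
          ≤ 4 * (T : ℝ) / d) ∧
    (∀ i,
      (∑ t ∈ Finset.Icc 1 (τ i), (1 / Real.sqrt d + x t i) ^ 2)
        + ∑ t ∈ Finset.Icc 1 (τ i), (1 / Real.sqrt d + (-1) * x t i) ^ 2
        = 2 * ∑ t ∈ Finset.Icc 1 (τ i), (1 / (d : ℝ) + (x t i) ^ 2) ∧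
      2 * ((T : ℝ) / d - 1)
        ≤ 2 * ∑ t ∈ Finset.Icc 1 (τ i), (1 / (d : ℝ) + (x t i) ^ 2)) := by
  have hsq : (1 / Real.sqrt d) ^ 2 = 1 / (d : ℝ) := by
    rw [div_pow, one_pow, Real.sq_sqrt d.cast_nonneg]
  have hcard : ∀ i, (#(Icc 1 (τ i)) : ℝ) * (1 / d) = τ i / d := fun i => by
    simp [div_eq_mul_inv]
  -- the sum stays below `T/d - 1` up to time `τ i - 1`, and one more step adds at most `1`
  have hsum_le : ∀ i, ∑ t ∈ Icc 1 (τ i), x t i ^ 2 ≤ T / d := fun i => by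
    obtain ⟨n, hn⟩ := Nat.exists_eq_add_of_le' (hτ1 i)
    have := sum_Icc_one_succ_le_of_sum_le (hmin i n (by omega)).le
      ((single_le_sum (fun j _ => sq_nonneg (x (n + 1) j)) (mem_univ i)).trans (hx (n + 1)))
    rw [hn]
    linarith
  have hsum_nonneg : ∀ i, 0 ≤ ∑ t ∈ Icc 1 (τ i), x t i ^ 2 := fun i =>
    sum_nonneg fun t _ => sq_nonneg _
  have hτ_div : ∀ i, (τ i : ℝ) / d ≤ T / d := fun i => by gcongr; exact_mod_cast hτT i
  refine ⟨fun i σ hσ => ?_, fun i => ⟨?_, ?_⟩⟩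
  · have hσ2 : σ ^ 2 = 1 := by rcases hσ with rfl | rfl <;> norm_num
    have hU := sum_add_mul_sq_le (Icc 1 (τ i)) (1 / Real.sqrt d) hσ2 (x · i)
    rw [hsq, hcard] at hU
    linarith [hsum_le i, hτ_div i, show 4 * (T : ℝ) / d = 4 * (T / d) by ring]
  · rw [← hsq]
    exact sum_add_sq_add_sum_add_neg_sq _ _ _
  · rw [sum_add_distrib, sum_const, nsmul_eq_mul, hcard]
    rcases hreach i with h | h
    · have : (τ i : ℝ) / d = T / d := by rw [h]
      linarith [hsum_nonneg i]
    · have : (0 : ℝ) ≤ τ i / d := by positivity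
      linarith

/-- Properties of the truncated exploration counts in the unit-ball lower bound:
with `τ_i = T ∧ min{t ≥ 1 : Σ_{s=1}^t x_{si}² ≥ T/d − 1}` and
`U_i(σ) = Σ_{t=1}^{τ_i} (1/√d + σ x_{ti})²`, one has `U_i(σ) ≤ 4T/d` for `σ ∈ {±1}`,
and `U_i(1) + U_i(−1) = 2 Σ_{t=1}^{τ_i} (1/d + x_{ti}²) ≥ 2(T/d − 1)`. -/
theorem stmt17 (d T : ℕ) (hd : 1 ≤ d) (hT : 4 * d ≤ T)
    (Δ : ℝ) (hΔ : Δ = 1 / (8 * Real.sqrt T))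
    (x : ℕ → Fin d → ℝ) (hx : ∀ t, ∑ i, (x t i) ^ 2 ≤ 1)
    (τ : Fin d → ℕ)
    (hτ1 : ∀ i, 1 ≤ τ i) (hτT : ∀ i, τ i ≤ T)
    (hmin : ∀ i, ∀ t, t < τ i →
      ∑ s ∈ Finset.Icc 1 t, (x s i) ^ 2 < (T : ℝ) / d - 1)
    (hreach : ∀ i, τ i = T ∨
      (T : ℝ) / d - 1 ≤ ∑ s ∈ Finset.Icc 1 (τ i), (x s i) ^ 2) :
    (∀ i, ∀ σ : ℝ, σ = 1 ∨ σ = -1 →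
        ∑ t ∈ Finset.Icc 1 (τ i), (1 / Real.sqrt d + σ * x t i) ^ 2
          ≤ 4 * (T : ℝ) / d) ∧
    (∀ i,
      (∑ t ∈ Finset.Icc 1 (τ i), (1 / Real.sqrt d + x t i) ^ 2)
        + ∑ t ∈ Finset.Icc 1 (τ i), (1 / Real.sqrt d + (-1) * x t i) ^ 2
        = 2 * ∑ t ∈ Finset.Icc 1 (τ i), (1 / (d : ℝ) + (x t i) ^ 2) ∧
      2 * ((T : ℝ) / d - 1)
        ≤ 2 * ∑ t ∈ Finset.Icc 1 (τ i), (1 / (d : ℝ) + (x t i) ^ 2)) :=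
  stmt17_general d T x hx τ hτ1 hτT hmin hreach
end

section
/- Let G, T > 0 and define S = {η_i = min(2^i/(GT), 1/G) : i = 0, 1, ...}, so that with b = 2 the grid runs from η_min = 1/(GT) to η_max = 1/G. Then for any P, V ≥ 0, min_{η∈S}[P/η + ηV] ≤ 3√(PV) + GP + V/(GT). -/
lemma stmt19_pow_two (x : ℝ) (hx : 1 ≤ x) : ∃ i : ℕ, (2:ℝ)^i ≤ x ∧ x < 2^(i+1) := by
  have hx0 : (0:ℝ) ≤ x := by linarith
  have h1 : 1 ≤ ⌊x⌋₊ := Nat.le_floor (by exact_mod_cast hx)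
  refine ⟨Nat.log 2 ⌊x⌋₊, ?_, ?_⟩
  · have h2 : 2 ^ Nat.log 2 ⌊x⌋₊ ≤ ⌊x⌋₊ := Nat.pow_log_le_self 2 (by omega)
    calc (2:ℝ) ^ Nat.log 2 ⌊x⌋₊ ≤ (⌊x⌋₊ : ℝ) := by exact_mod_cast h2
      _ ≤ x := Nat.floor_le hx0
  · have h3 : ⌊x⌋₊ < 2 ^ (Nat.log 2 ⌊x⌋₊ + 1) := Nat.lt_pow_succ_log_self (by norm_num) _
    have h4 : (⌊x⌋₊ : ℝ) + 1 ≤ 2 ^ (Nat.log 2 ⌊x⌋₊ + 1) := by exact_mod_cast h3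
    have := Nat.lt_floor_add_one x
    linarith

/-- Instantiation of the tuning lemma on the doubling grid
`S = {min(2ⁱ/(GT), 1/G)}` (ratio `b = 2`, `η_min = 1/(GT)`, `η_max = 1/G`):
there exists `η ∈ S` with `P/η + ηV ≤ 3√(PV) + GP + V/(GT)`. -/
theorem stmt19 (G T P V : ℝ) (hG : 0 < G) (hT : 0 < T) (hP : 0 ≤ P) (hV : 0 ≤ V) :
    ∃ i : ℕ,
      P / min ((2 : ℝ) ^ i / (G * T)) (1 / G)
        + min ((2 : ℝ) ^ i / (G * T)) (1 / G) * V
      ≤ 3 * Real.sqrt (P * V) + G * P + V / (G * T) := by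
  have hGT : 0 < G * T := mul_pos hG hT
  set s := Real.sqrt (P * V) with hs
  have hs0 : 0 ≤ s := Real.sqrt_nonneg _
  have hs2 : s ^ 2 = P * V := Real.sq_sqrt (mul_nonneg hP hV)
  by_cases hT1 : T ≤ 1
  · -- grid degenerates: take i = 0, η = 1/G
    refine ⟨0, ?_⟩
    have hmin : min ((2:ℝ)^(0:ℕ) / (G * T)) (1 / G) = 1 / G := by
      rw [min_eq_right]
      rw [div_le_div_iff₀ hG hGT]
      nlinarith
    rw [hmin]
    have h1 : P / (1 / G) = G * P := by field_simp
    have h2 : 1 / G * V ≤ V / (G * T) := by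
      have e : 1 / G * V = V / G := by ring
      rw [e, div_le_div_iff₀ hG hGT]
      nlinarith [mul_nonneg (mul_nonneg hV hG.le) (sub_nonneg.2 hT1)]
    rw [h1]
    nlinarith
  · push_neg at hT1
    by_cases hc2 : V ≤ G * s
    · -- large η*: take η = 1/G, need 2^i ≥ T
      obtain ⟨i, hi⟩ := pow_unbounded_of_one_lt T (by norm_num : (1:ℝ) < 2)
      refine ⟨i, ?_⟩
      have hmin : min ((2:ℝ)^i / (G * T)) (1 / G) = 1 / G := by
        rw [min_eq_right]
        rw [div_le_div_iff₀ hG hGT]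
        nlinarith
      rw [hmin]
      have h1 : P / (1 / G) = G * P := by field_simp
      have h2 : 1 / G * V ≤ s := by
        rw [div_mul_eq_mul_div, one_mul, div_le_iff₀ hG]
        nlinarith
      rw [h1]
      have hV' : 0 ≤ V / (G * T) := div_nonneg hV hGT.le
      linarith
    · push_neg at hc2
      by_cases hc3 : G * T * s ≤ V
      · -- small η*: take i = 0, η = 1/(G*T)
        refine ⟨0, ?_⟩
        have hmin : min ((2:ℝ)^(0:ℕ) / (G * T)) (1 / G) = 1 / (G * T) := by
          rw [min_eq_left]
          · norm_num
          rw [div_le_div_iff₀ hGT hG]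
          nlinarith
        rw [hmin]
        have h1 : P / (1 / (G * T)) = G * T * P := by field_simp
        have h2 : (1 / (G * T)) * V = V / (G * T) := by ring
        rw [h1, h2]
        -- need G*T*P ≤ 3*s
        have hP0 : P = 0 ∨ 0 < s := by
          rcases eq_or_lt_of_le hs0 with h | h
          · left
            rcases eq_or_lt_of_le hP with hp | hp
            · exact hp.symm
            · exfalso
              have hV0 : 0 < V := lt_of_le_of_lt (mul_nonneg hG.le hs0) hc2
              nlinarith
          · right; exact h
        have key : G * T * P ≤ 3 * s := by
          rcases hP0 with h | h
          · rw [h]; nlinarith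
          · have : G * T * P * s ≤ s ^ 2 := by nlinarith
            nlinarith
        nlinarith [mul_nonneg hG.le hP]
      · -- middle regime: G*s < V < G*T*s
        push_neg at hc3
        have hV0 : 0 < V := lt_of_le_of_lt (mul_nonneg hG.le hs0) hc2
        have hs0' : 0 < s := by nlinarith
        have hP0 : 0 < P := by nlinarith
        obtain ⟨i, h1, h2⟩ := stmt19_pow_two (G * T * s / V)
          (by rw [le_div_iff₀ hV0]; nlinarith)
        refine ⟨i, ?_⟩
        have hpow : (0:ℝ) < 2 ^ i := by positivity
        have hiV : (2:ℝ)^i * V ≤ G * T * s := by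
          rw [le_div_iff₀ hV0] at h1; linarith
        have hmin : min ((2:ℝ)^i / (G * T)) (1 / G) = (2:ℝ)^i / (G * T) := by
          rw [min_eq_left]
          rw [div_le_div_iff₀ hGT hG]
          nlinarith
        rw [hmin]
        have hA : (2:ℝ)^i / (G * T) * V ≤ s := by
          rw [div_mul_eq_mul_div, div_le_iff₀ hGT]
          nlinarith
        have h2' : G * T * s < 2 ^ (i+1) * V := by
          rw [div_lt_iff₀ hV0] at h2; linarith
        have hB : P / ((2:ℝ)^i / (G * T)) ≤ 2 * s := by
          rw [div_div_eq_mul_div, div_le_iff₀ hpow]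
          rw [pow_succ] at h2'
          nlinarith [mul_lt_mul_of_pos_left h2' hP0, mul_pos hs0' hpow, hs2, hs0']
        have hV' : 0 ≤ V / (G * T) := div_nonneg hV hGT.le
        linarith [mul_nonneg hG.le hP]
end
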